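/- arXiv:2604.07744 — 3 statements merged into one kernel-verified Lean document; each statement's English description precedes it below -/
import Mathlib

section
/- One-dimensional merge penalty for linear loss: let A ⊂ [u₁−D, u₁+D] and B ⊂ [u₂−D, u₂+D] be finite sets of reals with u₂ − u₁ − 2D = γ > 0, and let φ(S) := min_{t ∈ ℝ} Σ_{x∈S} |x − t| denote the optimal 1D median cost. Then φ(A ∪ B) ≥ φ(A) + φ(B) + γ·min{|A|, |B|}. -/
/-- Optimal 1D median cost of a finite set of reals. -/
noncomputable def medCost (S : Finset ℝ) : ℝ :=
  sInf (Set.range fun t : ℝ => ∑ x ∈ S, |x - t|)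

lemma medCost_bddBelow (S : Finset ℝ) :
    BddBelow (Set.range fun t : ℝ => ∑ x ∈ S, |x - t|) := by
  refine ⟨0, ?_⟩
  rintro y ⟨t, rfl⟩
  exact Finset.sum_nonneg fun x _ => abs_nonneg _

lemma medCost_le (S : Finset ℝ) (t : ℝ) : medCost S ≤ ∑ x ∈ S, |x - t| :=
  csInf_le (medCost_bddBelow S) ⟨t, rfl⟩

lemma sum_ge_right (S : Finset ℝ) (c t : ℝ) (h : ∀ x ∈ S, x ≤ c) :
    ∑ x ∈ S, |x - t| ≥ medCost S + (S.card : ℝ) * max 0 (t - c) := by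
  rcases le_or_gt t c with ht | ht
  · rw [max_eq_left (by linarith)]
    simpa using medCost_le S t
  · rw [max_eq_right (by linarith)]
    have : ∑ x ∈ S, |x - t| = ∑ x ∈ S, |x - c| + (S.card : ℝ) * (t - c) := by
      rw [Finset.card_eq_sum_ones S]
      push_cast
      rw [Finset.sum_mul, ← Finset.sum_add_distrib]
      apply Finset.sum_congr rfl
      intro x hx
      have := h x hx
      rw [abs_of_nonpos (by linarith), abs_of_nonpos (by linarith)]
      ring
    rw [this]
    have := medCost_le S c
    linarith

lemma sum_ge_left (S : Finset ℝ) (c t : ℝ) (h : ∀ x ∈ S, c ≤ x) :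
    ∑ x ∈ S, |x - t| ≥ medCost S + (S.card : ℝ) * max 0 (c - t) := by
  rcases le_or_gt c t with ht | ht
  · rw [max_eq_left (by linarith)]
    simpa using medCost_le S t
  · rw [max_eq_right (by linarith)]
    have : ∑ x ∈ S, |x - t| = ∑ x ∈ S, |x - c| + (S.card : ℝ) * (c - t) := by
      rw [Finset.card_eq_sum_ones S]
      push_cast
      rw [Finset.sum_mul, ← Finset.sum_add_distrib]
      apply Finset.sum_congr rfl
      intro x hx
      have := h x hx
      rw [abs_of_nonneg (by linarith), abs_of_nonneg (by linarith)]
      ring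
    rw [this]
    have := medCost_le S c
    linarith

theorem one_dim_merge_penalty (A B : Finset ℝ) (u₁ u₂ D γ : ℝ)
    (hD : 0 ≤ D) (hγ : 0 < γ)
    (hgap : u₂ - u₁ - 2 * D = γ)
    (hA : ↑A ⊆ Set.Icc (u₁ - D) (u₁ + D))
    (hB : ↑B ⊆ Set.Icc (u₂ - D) (u₂ + D)) :
    medCost (A ∪ B) ≥ medCost A + medCost B + γ * min (A.card : ℝ) (B.card : ℝ) := by
  have hAle : ∀ x ∈ A, x ≤ u₁ + D := fun x hx => (hA hx).2
  have hBge : ∀ x ∈ B, u₂ - D ≤ x := fun x hx => (hB hx).1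
  have hdisj : Disjoint A B := by
    rw [Finset.disjoint_left]
    intro x hxA hxB
    have h1 := hAle x hxA
    have h2 := hBge x hxB
    linarith
  rw [ge_iff_le, medCost]
  apply le_csInf (Set.range_nonempty _)
  rintro y ⟨t, rfl⟩
  simp only
  rw [Finset.sum_union hdisj]
  have h1 := sum_ge_right A (u₁ + D) t hAle
  have h2 := sum_ge_left B (u₂ - D) t hBge
  set M1 := max 0 (t - (u₁ + D)) with hM1
  set M2 := max 0 (u₂ - D - t) with hM2
  have hM1n : 0 ≤ M1 := le_max_left _ _
  have hM2n : 0 ≤ M2 := le_max_left _ _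
  have hMsum : γ ≤ M1 + M2 := by
    have a1 : t - (u₁ + D) ≤ M1 := le_max_right _ _
    have a2 : u₂ - D - t ≤ M2 := le_max_right _ _
    linarith
  have hm : min (A.card : ℝ) (B.card : ℝ) ≤ (A.card : ℝ) := min_le_left _ _
  have hm' : min (A.card : ℝ) (B.card : ℝ) ≤ (B.card : ℝ) := min_le_right _ _
  have hmn : 0 ≤ min (A.card : ℝ) (B.card : ℝ) :=
    le_min (Nat.cast_nonneg _) (Nat.cast_nonneg _)
  simp only [medCost] at h1 h2 ⊢
  nlinarith [mul_le_mul_of_nonneg_right hm hM1n, mul_le_mul_of_nonneg_right hm' hM2n,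
    mul_le_mul_of_nonneg_left hMsum hmn]
end

section
/- Lower bound on the k-means mixing coefficient: let n₁ ≤ n₂, n = n₁+n₂, and let m₁ ∈ [0, n₁], m₂ ∈ [0, n₂] with m := m₁+m₂ ≤ n/2. Define Ψ(m₁, m₂) := (n₁−m₁)m₂/(n₁−m₁+m₂) + (n₂−m₂)m₁/(n₂−m₂+m₁), with the convention that a term is 0 when its numerator is 0. Then Ψ(m₁, m₂) ≥ (n₁/n)·(m₁+m₂). -/
theorem kmeans_mixing_coefficient_lb (n₁ n₂ n m₁ m₂ : ℝ)
    (h12 : n₁ ≤ n₂) (hn : n = n₁ + n₂) (hnpos : 0 < n)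
    (hm1 : 0 ≤ m₁) (hm1n : m₁ ≤ n₁)
    (hm2 : 0 ≤ m₂) (hm2n : m₂ ≤ n₂)
    (hm : m₁ + m₂ ≤ n / 2) :
    (n₁ - m₁) * m₂ / (n₁ - m₁ + m₂) + (n₂ - m₂) * m₁ / (n₂ - m₂ + m₁)
      ≥ n₁ / n * (m₁ + m₂) := by
  subst hn
  have ha : 0 ≤ n₁ - m₁ := by linarith
  have hb : 0 ≤ n₂ - m₂ := by linarith
  have hA : 0 ≤ n₁ - m₁ + m₂ := by linarith
  have hB : 0 ≤ n₂ - m₂ + m₁ := by linarith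
  have hd : 0 ≤ n₂ - m₂ - m₁ := by linarith
  have hc : 0 ≤ n₁ + n₂ - 2 * (m₁ + m₂) := by linarith
  have he : 0 ≤ n₂ - n₁ := by linarith
  rcases eq_or_lt_of_le hA with hA0 | hA0
  · have h1 : n₁ - m₁ = 0 := by linarith
    have h2 : m₂ = 0 := by linarith
    subst h2
    simp only [mul_zero, zero_div, zero_add, add_zero, sub_zero] at *
    rcases eq_or_lt_of_le hB with hB0 | hB0
    · have : m₁ = 0 := by linarith
      simp [this]
    · rw [ge_iff_le, div_mul_eq_mul_div, div_le_div_iff₀ hnpos hB0]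
      nlinarith [mul_nonneg (mul_nonneg hm1 hm1) he, mul_nonneg (mul_nonneg hm1 hb) he,
        mul_nonneg hm1 hb]
  · rcases eq_or_lt_of_le hB with hB0 | hB0
    · have h1 : n₂ - m₂ = 0 := by linarith
      have h2 : m₁ = 0 := by linarith
      subst h2
      simp only [mul_zero, zero_div, add_zero, sub_zero, zero_add] at *
      rw [ge_iff_le, div_mul_eq_mul_div, div_le_div_iff₀ hnpos hA0]
      nlinarith [mul_nonneg (mul_nonneg hm2 hm2) he, mul_nonneg (mul_nonneg hm2 ha) he,
        mul_nonneg hm2 ha]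
    · rw [div_add_div _ _ (ne_of_gt hA0) (ne_of_gt hB0), ge_iff_le,
        div_mul_eq_mul_div, div_le_div_iff₀ hnpos (mul_pos hA0 hB0)]
      nlinarith [mul_nonneg (mul_nonneg hm1 hm2) (mul_nonneg hb hc),
        mul_nonneg (mul_nonneg hm1 hm2) (mul_nonneg hd (add_nonneg hm1 hm2)),
        mul_nonneg (mul_nonneg ha (mul_nonneg hm1 hm2)) hd,
        mul_nonneg (mul_nonneg ha hm1) (mul_nonneg hb hd),
        mul_nonneg (mul_nonneg ha hm2) (mul_nonneg hd (add_nonneg hb hm1)),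
        mul_nonneg (mul_nonneg ha (mul_nonneg hm1 hm1)) he]
end

section
/- Adversarial failure of k-means under imbalance: consider a 1D configuration with n₁ points at 0 and n₂/2 points each at Δ−D and Δ+D (n₂ even, Δ > D > 0). The cost of the correct 2-clustering with centers at 0 and Δ is n₂·D², and the cost of the splitting solution with centers at Δ−D and Δ+D is n₁·(Δ−D)². Hence if n₁·(Δ−D)² < n₂·D², equivalently Δ/D < 1 + √(n₂/n₁), the splitting solution has strictly smaller k-means cost than the correct solution. -/
/-- 1D `k`-means cost (k = 2) of the adversarial configuration:
`n₁` points at `0`, `n₂/2` points each at `Δ−D` and `Δ+D`. -/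
noncomputable def kmCost (n₁ n₂ : ℕ) (Δ D θ₁ θ₂ : ℝ) : ℝ :=
  (n₁ : ℝ) * min ((0 - θ₁) ^ 2) ((0 - θ₂) ^ 2) +
  (n₂ : ℝ) / 2 * min ((Δ - D - θ₁) ^ 2) ((Δ - D - θ₂) ^ 2) +
  (n₂ : ℝ) / 2 * min ((Δ + D - θ₁) ^ 2) ((Δ + D - θ₂) ^ 2)

theorem mul_sq_lt_mul_sq_iff_div_lt_sqrt {a b m n : ℝ} (ha : 0 ≤ a) (hb : 0 < b) (hm : 0 < m) :
    m * a ^ 2 < n * b ^ 2 ↔ a / b < √(n / m) := by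
  rw [Real.lt_sqrt (div_nonneg ha hb.le), div_pow, div_lt_div_iff₀ (by positivity) hm, mul_comm]

theorem kmCost_true_centers (n₁ n₂ : ℕ) {Δ D : ℝ} (hD : 0 ≤ D) (hsep : D ≤ Δ - D) :
    kmCost n₁ n₂ Δ D 0 Δ = n₂ * D ^ 2 := by
  unfold kmCost
  rw [min_eq_left (by nlinarith), min_eq_right (by nlinarith), min_eq_right (by nlinarith)]
  ring

theorem kmCost_split_centers (n₁ n₂ : ℕ) {Δ D : ℝ} (hΔ : 0 ≤ Δ) (hD : 0 ≤ D) :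
    kmCost n₁ n₂ Δ D (Δ - D) (Δ + D) = n₁ * (Δ - D) ^ 2 := by
  unfold kmCost
  rw [min_eq_left (by nlinarith), min_eq_left (by nlinarith), min_eq_right (by nlinarith)]
  ring

theorem kmeans_imbalance_failure_general (n₁ n₂ : ℕ) (Δ D : ℝ)
    (hn1 : 0 < n₁)
    (hD : 0 < D) (hsep : D < Δ - D) :
    kmCost n₁ n₂ Δ D 0 Δ = (n₂ : ℝ) * D ^ 2 ∧
    kmCost n₁ n₂ Δ D (Δ - D) (Δ + D) = (n₁ : ℝ) * (Δ - D) ^ 2 ∧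
    ((n₁ : ℝ) * (Δ - D) ^ 2 < (n₂ : ℝ) * D ^ 2 ↔
        Δ / D < 1 + Real.sqrt ((n₂ : ℝ) / (n₁ : ℝ))) ∧
    ((n₁ : ℝ) * (Δ - D) ^ 2 < (n₂ : ℝ) * D ^ 2 →
        kmCost n₁ n₂ Δ D (Δ - D) (Δ + D) < kmCost n₁ n₂ Δ D 0 Δ) := by
  have htrue := kmCost_true_centers n₁ n₂ hD.le hsep.le
  have hsplit := kmCost_split_centers n₁ n₂ (Δ := Δ) (by linarith) hD.le
  have hratio : Δ / D = 1 + (Δ - D) / D := by field_simp; ring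
  refine ⟨htrue, hsplit, ?_, fun h => by rwa [htrue, hsplit]⟩
  rw [hratio, add_lt_add_iff_left]
  exact mul_sq_lt_mul_sq_iff_div_lt_sqrt (by linarith) hD (by exact_mod_cast hn1)

theorem kmeans_imbalance_failure (n₁ n₂ : ℕ) (Δ D : ℝ)
    (hn1 : 0 < n₁) (hn2 : 0 < n₂) (heven : Even n₂)
    (hD : 0 < D) (hΔD : D < Δ) (hsep : D < Δ - D) :
    kmCost n₁ n₂ Δ D 0 Δ = (n₂ : ℝ) * D ^ 2 ∧
    kmCost n₁ n₂ Δ D (Δ - D) (Δ + D) = (n₁ : ℝ) * (Δ - D) ^ 2 ∧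
    ((n₁ : ℝ) * (Δ - D) ^ 2 < (n₂ : ℝ) * D ^ 2 ↔
        Δ / D < 1 + Real.sqrt ((n₂ : ℝ) / (n₁ : ℝ))) ∧
    ((n₁ : ℝ) * (Δ - D) ^ 2 < (n₂ : ℝ) * D ^ 2 →
        kmCost n₁ n₂ Δ D (Δ - D) (Δ + D) < kmCost n₁ n₂ Δ D 0 Δ) :=
  kmeans_imbalance_failure_general n₁ n₂ Δ D hn1 hD hsep
end
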